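/- arXiv:1504.04917 — 3 statements merged into one kernel-verified Lean document; each statement's English description precedes it below -/
import Mathlib

section
/- Let p be a prime number with p·1_Λ ≠ 0. Let M be a finitely generated torsion Λ-module which is completely faithful, and let M(p) = {m ∈ M : p^k m = 0 for some k ≥ 0} be its p-primary submodule (a Λ-submodule of M, since p·1_Λ is central). Then M(p) is a pseudo-null Λ-module. -/
open CategoryTheory

/-- A module is torsion if every element is annihilated by a nonzero ring element. -/
def IsTorsionMod (Λ : Type) [Ring Λ] (M : Type) [AddCommGroup M] [Module Λ M] : Prop :=
  ∀ m : M, ∃ l : Λ, l ≠ 0 ∧ l • m = 0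

/-- A finitely generated torsion `Λ`-module is pseudo-null if `Ext¹_Λ(M, Λ) = 0`. -/
def IsPseudoNull (Λ : Type) [Ring Λ] (M : Type) [AddCommGroup M] [Module Λ M] : Prop :=
  Module.Finite Λ M ∧ IsTorsionMod Λ M ∧
    Subsingleton (((Ext ℤ (ModuleCat Λ) 1).obj (Opposite.op (ModuleCat.of Λ M))).obj
      (ModuleCat.of Λ Λ))

/-- `N` is pseudo-related to a subquotient of `M`: there are submodules `A ≤ B` of `M`,
a submodule `N₁ ≤ N` with `N/N₁` pseudo-null, a pseudo-null submodule `C` of `B/A`, and a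
`Λ`-homomorphism `N₁ → (B/A)/C` with pseudo-null kernel and cokernel. -/
def PseudoRelated (Λ : Type) [Ring Λ] (N M : Type) [AddCommGroup N] [Module Λ N]
    [AddCommGroup M] [Module Λ M] : Prop :=
  ∃ (A B : Submodule Λ M), A ≤ B ∧
    ∃ (N₁ : Submodule Λ N) (C : Submodule Λ (↥B ⧸ A.comap B.subtype))
      (f : N₁ →ₗ[Λ] ((↥B ⧸ A.comap B.subtype) ⧸ C)),
      IsPseudoNull Λ (N ⧸ N₁) ∧ IsPseudoNull Λ C ∧
      IsPseudoNull Λ (LinearMap.ker f) ∧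
      IsPseudoNull Λ ((((↥B ⧸ A.comap B.subtype) ⧸ C)) ⧸ LinearMap.range f)

/-- A finitely generated torsion `Λ`-module `M` is completely faithful if every finitely
generated torsion `Λ`-module `N` which is not pseudo-null and is pseudo-related to a
subquotient of `M` has trivial global annihilator ideal. -/
def CompletelyFaithful (Λ : Type) [Ring Λ] (M : Type) [AddCommGroup M] [Module Λ M] : Prop :=
  ∀ (N : Type) [AddCommGroup N] [Module Λ N],
    Module.Finite Λ N → IsTorsionMod Λ N → ¬ IsPseudoNull Λ N → PseudoRelated Λ N M →
      ∀ l : Λ, (∀ n : N, l • n = 0) → l = 0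

/-- The `p`-primary submodule `M(p) = {m ∈ M : pᵏ • m = 0 for some k}`, where `p` acts via the
central element `p·1_Λ`. -/
def pPrimarySub (Λ : Type) [Ring Λ] (p : ℕ) (M : Type) [AddCommGroup M] [Module Λ M] :
    Submodule Λ M where
  carrier := {m | ∃ k : ℕ, ((p : Λ) ^ k) • m = 0}
  zero_mem' := ⟨0, by simp⟩
  add_mem' := by
    rintro a b ⟨k, hk⟩ ⟨l, hl⟩
    refine ⟨k + l, ?_⟩
    have h1 : ((p : Λ) ^ (k + l)) • a = 0 := by
      rw [add_comm, pow_add, mul_smul, hk, smul_zero]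
    have h2 : ((p : Λ) ^ (k + l)) • b = 0 := by
      rw [pow_add, mul_smul, hl, smul_zero]
    rw [smul_add, h1, h2, add_zero]
  smul_mem' := by
    rintro c m ⟨k, hk⟩
    refine ⟨k, ?_⟩
    have hcomm : (p : Λ) ^ k * c = c * (p : Λ) ^ k := ((Nat.cast_commute p c).pow_left k).eq
    rw [smul_smul, hcomm, mul_smul, hk, smul_zero]

theorem mem_pPrimarySub {Λ : Type} [Ring Λ] {p : ℕ} {M : Type} [AddCommGroup M] [Module Λ M]
    (m : M) : m ∈ pPrimarySub Λ p M ↔ ∃ k : ℕ, ((p : Λ) ^ k) • m = 0 := Iff.rfl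

/-!
`M(p)` is the union of the kernels of the powers of `p` acting on `M`, so by Noetherianity it is
killed by a single `pᵏ`. Were `M(p)` not pseudo-null, it would be pseudo-related to itself, a
subquotient of `M`; complete faithfulness would then force `pᵏ = 0`, impossible in a ring without
zero divisors where `p ≠ 0`.
-/

lemma subsingleton_ext_one_of_subsingleton (Λ : Type) [Ring Λ] (M : Type) [AddCommGroup M]
    [Module Λ M] [Subsingleton M] :
    Subsingleton (((Ext ℤ (ModuleCat Λ) 1).obj (Opposite.op (ModuleCat.of Λ M))).obj
      (ModuleCat.of Λ Λ)) :=
  have : Projective (ModuleCat.of Λ M) := (ModuleCat.isZero_of_subsingleton _).projective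
  ModuleCat.subsingleton_of_isZero (isZero_Ext_succ_of_projective _ _ 0)

lemma isPseudoNull_of_subsingleton (Λ : Type) [Ring Λ] [Nontrivial Λ] (M : Type)
    [AddCommGroup M] [Module Λ M] [Subsingleton M] : IsPseudoNull Λ M :=
  ⟨Module.Finite.of_surjective (0 : Λ →ₗ[Λ] M) fun _ => ⟨0, Subsingleton.elim _ _⟩,
    fun _ => ⟨1, one_ne_zero, Subsingleton.elim _ _⟩,
    subsingleton_ext_one_of_subsingleton Λ M⟩

lemma pseudoRelated_of_submodule (Λ : Type) [Ring Λ] [Nontrivial Λ] {M : Type} [AddCommGroup M]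
    [Module Λ M] (N : Submodule Λ M) : PseudoRelated Λ N M := by
  let e : (⊤ : Submodule Λ N) ≃ₗ[Λ] (N ⧸ (⊥ : Submodule Λ M).comap N.subtype) ⧸ ⊥ :=
    Submodule.topEquiv ≪≫ₗ
      (Submodule.quotEquivOfEqBot _ (by simp)).symm ≪≫ₗ (Submodule.quotEquivOfEqBot ⊥ rfl).symm
  refine ⟨⊥, N, bot_le, ⊤, ⊥, e, isPseudoNull_of_subsingleton Λ _,
    isPseudoNull_of_subsingleton Λ _, ?_, ?_⟩
  · rw [LinearEquiv.ker]; exact isPseudoNull_of_subsingleton Λ _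
  · rw [LinearEquiv.range]; exact isPseudoNull_of_subsingleton Λ _

lemma natCast_pow_apply_eq_smul {Λ : Type} [Ring Λ] (p k : ℕ) {M : Type} [AddCommGroup M]
    [Module Λ M] (m : M) : ((p : Module.End Λ M) ^ k) m = ((p : Λ) ^ k) • m := by
  rw [← Nat.cast_pow, ← Nat.cast_pow, Module.End.natCast_apply, Nat.cast_smul_eq_nsmul]

lemma pPrimarySub_eq_iSup_ker_pow (Λ : Type) [Ring Λ] (p : ℕ) (M : Type) [AddCommGroup M]
    [Module Λ M] : pPrimarySub Λ p M = ⨆ k, LinearMap.ker ((p : Module.End Λ M) ^ k) := by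
  ext m
  rw [mem_pPrimarySub]
  refine ((Submodule.mem_iSup_of_chain (LinearMap.iterateKer _) m).trans ?_).symm
  simp only [LinearMap.iterateKer_coe, LinearMap.mem_ker, natCast_pow_apply_eq_smul]

lemma exists_pow_smul_eq_zero_of_mem_pPrimarySub (Λ : Type) [Ring Λ] (p : ℕ) (M : Type)
    [AddCommGroup M] [Module Λ M] [IsNoetherian Λ M] :
    ∃ K : ℕ, ∀ m ∈ pPrimarySub Λ p M, ((p : Λ) ^ K) • m = 0 := by
  obtain ⟨K, hK⟩ := (LinearMap.eventually_iSup_ker_pow_eq (p : Module.End Λ M)).exists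
  refine ⟨K, fun m hm => ?_⟩
  rwa [pPrimarySub_eq_iSup_ker_pow, hK, LinearMap.mem_ker, natCast_pow_apply_eq_smul] at hm

lemma IsTorsionMod.submodule {Λ : Type} [Ring Λ] {M : Type} [AddCommGroup M] [Module Λ M]
    (h : IsTorsionMod Λ M) (N : Submodule Λ M) : IsTorsionMod Λ N := fun n =>
  let ⟨l, hl, hln⟩ := h n
  ⟨l, hl, Subtype.ext hln⟩

theorem isPseudoNull_pPrimary_of_completelyFaithful_general
    (Λ : Type) [Ring Λ] [IsNoetherianRing Λ] [NoZeroDivisors Λ]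
    (p : ℕ) (hpΛ : (p : Λ) ≠ 0)
    (M : Type) [AddCommGroup M] [Module Λ M] [Module.Finite Λ M]
    (htors : IsTorsionMod Λ M) (hcf : CompletelyFaithful Λ M) :
    IsPseudoNull Λ (pPrimarySub Λ p M) := by
  have : Nontrivial Λ := nontrivial_of_ne _ _ hpΛ
  obtain ⟨K, hK⟩ := exists_pow_smul_eq_zero_of_mem_pPrimarySub Λ p M
  by_contra hnull
  exact pow_ne_zero K hpΛ <| hcf _ inferInstance (htors.submodule _) hnull
    (pseudoRelated_of_submodule Λ _) _ fun m => Subtype.ext (hK m m.2)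

/-- If `p` is a prime with `p·1_Λ ≠ 0` and `M` is a finitely generated torsion
`Λ`-module which is completely faithful, then its `p`-primary submodule `M(p)` is pseudo-null. -/
theorem isPseudoNull_pPrimary_of_completelyFaithful
    (Λ : Type) [Ring Λ] [IsNoetherianRing Λ] [IsNoetherianRing Λᵐᵒᵖ] [NoZeroDivisors Λ]
    (p : ℕ) (hp : p.Prime) (hpΛ : (p : Λ) ≠ 0)
    (M : Type) [AddCommGroup M] [Module Λ M] [Module.Finite Λ M]
    (htors : IsTorsionMod Λ M) (hcf : CompletelyFaithful Λ M) :
    IsPseudoNull Λ (pPrimarySub Λ p M) :=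
  isPseudoNull_pPrimary_of_completelyFaithful_general Λ p hpΛ M htors hcf
end

section
/- Let M be a module over R = ℤ_p[[X]] and let a ∈ pℤ_p. Suppose that there is a Weierstrass polynomial f ∈ ℤ_p[X] whose image in R annihilates M (f·M = 0), and that multiplication by X − a is injective on M (i.e. M[X − a] = 0). Then there exists an integer k ≥ 1 such that p^k annihilates the quotient module M/(X − a)M; in particular, M/(X − a)M is a p-primary module (every element is killed by a power of p). -/
/-!
Write `f = (X - a)^r h` with `h(a) ≠ 0`. Since `X - a` acts injectively, `h` already kills `M`,
and `h ≡ h(a) mod (X - a)` shows that the constant `h(a)` kills `M/(X - a)M`. In the discrete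
valuation ring `ℤ_p` the nonzero element `h(a)` divides a power of `p`.
-/

open Polynomial PowerSeries

/-- A Weierstrass polynomial over `ℤ_p`: a monic polynomial all of whose non-leading
coefficients are divisible by `p`. -/
def IsWeierstrassPoly (p : ℕ) [Fact p.Prime] (f : Polynomial ℤ_[p]) : Prop :=
  f.Monic ∧ ∀ i < f.natDegree, (p : ℤ_[p]) ∣ f.coeff i

section
variable {S M : Type*} [CommRing S] [AddCommGroup M] [Module S M] {t : S}

theorem smul_eq_zero_of_pow_mul_smul_eq_zero (hinj : ∀ m : M, t • m = 0 → m = 0) {s : S}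
    (n : ℕ) (h : ∀ m : M, (t ^ n * s) • m = 0) (m : M) : s • m = 0 := by
  induction n with
  | zero => simpa using h m
  | succ n ih =>
    exact ih fun m ↦ hinj _ (by rw [← mul_smul, ← mul_assoc, ← pow_succ']; exact h m)

theorem mem_annihilator_quotient_range_lsmul {g c : S} (h : ∀ m : M, (t * g + c) • m = 0) :
    c ∈ Module.annihilator S (M ⧸ LinearMap.range (LinearMap.lsmul S M t)) := by
  rw [Module.mem_annihilator]
  intro q
  induction q using Submodule.Quotient.induction_on with | _ m => ?_
  rw [← Submodule.Quotient.mk_smul, Submodule.Quotient.mk_eq_zero]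
  refine ⟨-(g • m), ?_⟩
  rw [LinearMap.lsmul_apply, smul_neg, smul_smul, neg_eq_iff_add_eq_zero, ← add_smul]
  exact h m

end

theorem Polynomial.exists_eval_ne_zero_map_C_mem_annihilator {A S M : Type*} [CommRing A]
    [CommRing S] [AddCommGroup M] [Module S M] (φ : A[X] →+* S) {f : A[X]} (hf : f ≠ 0) (a : A)
    (hfM : ∀ m : M, φ f • m = 0) (hinj : ∀ m : M, φ (X - C a) • m = 0 → m = 0) :
    ∃ c : A, c ≠ 0 ∧ φ (C c) ∈
      Module.annihilator S (M ⧸ LinearMap.range (LinearMap.lsmul S M (φ (X - C a)))) := by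
  obtain ⟨h, hfh, hh⟩ := f.exists_eq_pow_rootMultiplicity_mul_and_not_dvd hf a
  obtain ⟨g, hg⟩ := X_sub_C_dvd_sub_C_eval (p := h) (a := a)
  have hhM : ∀ m : M, (φ (X - C a) * φ g + φ (C (h.eval a))) • m = 0 := by
    refine smul_eq_zero_of_pow_mul_smul_eq_zero hinj (f.rootMultiplicity a) fun m ↦ ?_
    rw [← map_mul, ← map_add, ← hg, sub_add_cancel, ← map_pow, ← map_mul, ← hfh]
    exact hfM m
  exact ⟨h.eval a, fun h0 ↦ hh (dvd_iff_isRoot.mpr h0),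
    mem_annihilator_quotient_range_lsmul hhM⟩

theorem pow_p_annihilates_quotient_of_weierstrass_annihilator_general
    (p : ℕ) [Fact p.Prime]
    (M : Type) [AddCommGroup M] [Module (PowerSeries ℤ_[p]) M]
    (a : ℤ_[p])
    (f : Polynomial ℤ_[p]) (hf : IsWeierstrassPoly p f)
    (hfM : ∀ m : M, (Polynomial.coeToPowerSeries.ringHom f : PowerSeries ℤ_[p]) • m = 0)
    (hinj : ∀ m : M,
      (PowerSeries.X - PowerSeries.C a : PowerSeries ℤ_[p]) • m = 0 → m = 0) :
    ∃ k : ℕ, 1 ≤ k ∧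
      (∀ m : M ⧸ LinearMap.range (LinearMap.lsmul (PowerSeries ℤ_[p]) M
          (PowerSeries.X - PowerSeries.C a)),
        ((p : PowerSeries ℤ_[p]) ^ k) • m = 0) ∧
      (∀ m : M ⧸ LinearMap.range (LinearMap.lsmul (PowerSeries ℤ_[p]) M
          (PowerSeries.X - PowerSeries.C a)),
        ∃ j : ℕ, ((p : PowerSeries ℤ_[p]) ^ j) • m = 0) := by
  have hX : coeToPowerSeries.ringHom (Polynomial.X - Polynomial.C a) =
      PowerSeries.X - PowerSeries.C a := by
    simp [coeToPowerSeries.ringHom_apply, Polynomial.coe_X, Polynomial.coe_C]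
  obtain ⟨c, hc0, hc⟩ := exists_eval_ne_zero_map_C_mem_annihilator coeToPowerSeries.ringHom
    hf.1.ne_zero a hfM (by rwa [hX])
  obtain ⟨n, hcp⟩ :=
    IsDiscreteValuationRing.associated_pow_irreducible hc0 PadicInt.irreducible_p
  obtain ⟨u, hu⟩ := hcp.dvd
  rw [hX, coeToPowerSeries.ringHom_apply, Polynomial.coe_C] at hc
  have hpn := Ideal.mul_mem_right (PowerSeries.C u * p) _ hc
  rw [← mul_assoc, ← map_mul, ← hu, map_pow, map_natCast, ← pow_succ,
    Module.mem_annihilator] at hpn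
  exact ⟨n + 1, Nat.le_add_left 1 n, hpn, fun m ↦ ⟨n + 1, hpn m⟩⟩

/-- Let `M` be a module over `R = ℤ_p⟦X⟧` and `a ∈ pℤ_p`. If some Weierstrass
polynomial `f` annihilates `M` and multiplication by `X - a` is injective on `M`, then there is
`k ≥ 1` with `p^k · (M/(X - a)M) = 0`; in particular `M/(X - a)M` is `p`-primary. -/
theorem pow_p_annihilates_quotient_of_weierstrass_annihilator
    (p : ℕ) [Fact p.Prime]
    (M : Type) [AddCommGroup M] [Module (PowerSeries ℤ_[p]) M]
    (a : ℤ_[p]) (ha : (p : ℤ_[p]) ∣ a)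
    (f : Polynomial ℤ_[p]) (hf : IsWeierstrassPoly p f)
    (hfM : ∀ m : M, (Polynomial.coeToPowerSeries.ringHom f : PowerSeries ℤ_[p]) • m = 0)
    (hinj : ∀ m : M,
      (PowerSeries.X - PowerSeries.C a : PowerSeries ℤ_[p]) • m = 0 → m = 0) :
    ∃ k : ℕ, 1 ≤ k ∧
      (∀ m : M ⧸ LinearMap.range (LinearMap.lsmul (PowerSeries ℤ_[p]) M
          (PowerSeries.X - PowerSeries.C a)),
        ((p : PowerSeries ℤ_[p]) ^ k) • m = 0) ∧
      (∀ m : M ⧸ LinearMap.range (LinearMap.lsmul (PowerSeries ℤ_[p]) M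
          (PowerSeries.X - PowerSeries.C a)),
        ∃ j : ℕ, ((p : PowerSeries ℤ_[p]) ^ j) • m = 0) :=
  pow_p_annihilates_quotient_of_weierstrass_annihilator_general p M a f hf hfM hinj
end

section
/- Let p be a prime with p·1_Λ ≠ 0, and let M be a finitely generated torsion Λ-module whose p-primary submodule M(p) = {m ∈ M : p^k m = 0 for some k ≥ 0} is pseudo-null. Write M_f = M/M(p). Then M is either a pseudo-null Λ-module or a completely faithful Λ-module if and only if M_f is either a pseudo-null Λ-module or a completely faithful Λ-module. -/
open CategoryTheory

section Aux
variable {Λ : Type} [Ring Λ]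

theorem isTorsionMod_of_surjective {M₁ M₂ : Type} [AddCommGroup M₁] [Module Λ M₁]
    [AddCommGroup M₂] [Module Λ M₂] (f : M₁ →ₗ[Λ] M₂) (hf : Function.Surjective f)
    (h : IsTorsionMod Λ M₁) : IsTorsionMod Λ M₂ := by
  intro m
  obtain ⟨x, rfl⟩ := hf m
  obtain ⟨l, hl, h0⟩ := h x
  exact ⟨l, hl, by rw [← map_smul, h0, map_zero]⟩

theorem isTorsionMod_submodule {M : Type} [AddCommGroup M] [Module Λ M]
    (h : IsTorsionMod Λ M) (S : Submodule Λ M) : IsTorsionMod Λ S := by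
  intro m
  obtain ⟨l, hl, h0⟩ := h (m : M)
  exact ⟨l, hl, Subtype.ext (by simpa using h0)⟩

theorem finite_submodule' [IsNoetherianRing Λ] {M : Type} [AddCommGroup M] [Module Λ M]
    [Module.Finite Λ M] (S : Submodule Λ M) : Module.Finite Λ S :=
  Module.Finite.iff_fg.mpr (IsNoetherian.noetherian S)

theorem pn_congr {M₁ M₂ : Type} [AddCommGroup M₁] [Module Λ M₁]
    [AddCommGroup M₂] [Module Λ M₂] (e : M₁ ≃ₗ[Λ] M₂) (h : IsPseudoNull Λ M₁) :
    IsPseudoNull Λ M₂ := by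
  obtain ⟨hf, ht, hs⟩ := h
  refine ⟨Module.Finite.equiv e, ?_, ?_⟩
  · intro m
    obtain ⟨l, hl, hlm⟩ := ht (e.symm m)
    exact ⟨l, hl, by rw [← e.apply_symm_apply m, ← map_smul, hlm, map_zero]⟩
  · haveI := hs
    exact Equiv.subsingleton
      (((forget (ModuleCat ℤ)).mapIso
        (((Ext ℤ (ModuleCat Λ) 1).mapIso (e.toModuleIso).op).app (ModuleCat.of Λ Λ))).toEquiv)
end Aux

/-- closure hypotheses -/
abbrev ClosedSub (Λ : Type) [Ring Λ] : Prop :=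
  ∀ (P : Type) [AddCommGroup P] [Module Λ P], Module.Finite Λ P → IsTorsionMod Λ P →
      IsPseudoNull Λ P → ∀ S : Submodule Λ P, IsPseudoNull Λ S

abbrev ClosedQuot (Λ : Type) [Ring Λ] : Prop :=
  ∀ (P : Type) [AddCommGroup P] [Module Λ P], Module.Finite Λ P → IsTorsionMod Λ P →
      IsPseudoNull Λ P → ∀ S : Submodule Λ P, IsPseudoNull Λ (P ⧸ S)

abbrev ClosedExt (Λ : Type) [Ring Λ] : Prop :=
  ∀ (P : Type) [AddCommGroup P] [Module Λ P], Module.Finite Λ P → IsTorsionMod Λ P →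
      ∀ S : Submodule Λ P, IsPseudoNull Λ S → IsPseudoNull Λ (P ⧸ S) → IsPseudoNull Λ P

def PRel (Λ : Type) [Ring Λ] (N Q : Type) [AddCommGroup N] [Module Λ N]
    [AddCommGroup Q] [Module Λ Q] : Prop :=
  ∃ (N₁ : Submodule Λ N) (C : Submodule Λ Q) (f : N₁ →ₗ[Λ] (Q ⧸ C)),
      IsPseudoNull Λ (N ⧸ N₁) ∧ IsPseudoNull Λ C ∧
      IsPseudoNull Λ (LinearMap.ker f) ∧
      IsPseudoNull Λ ((Q ⧸ C) ⧸ LinearMap.range f)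

theorem rel_surj {Λ : Type} [Ring Λ] [IsNoetherianRing Λ]
    (hsub : ClosedSub Λ) (hquot : ClosedQuot Λ) (hext : ClosedExt Λ)
    {N Q Q' : Type} [AddCommGroup N] [Module Λ N] [AddCommGroup Q] [Module Λ Q]
    [AddCommGroup Q'] [Module Λ Q']
    [Module.Finite Λ N] (hNt : IsTorsionMod Λ N)
    (g : Q →ₗ[Λ] Q') (hg : Function.Surjective g)
    (hker : IsPseudoNull Λ (LinearMap.ker g))
    (h : PRel Λ N Q) : PRel Λ N Q' := by
  obtain ⟨N₁, C, f, h1, h2, h3, h4⟩ := h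
  set C' : Submodule Λ Q' := C.map g with hC'
  have hle : C ≤ C'.comap g := Submodule.le_comap_map g C
  set gq : (Q ⧸ C) →ₗ[Λ] (Q' ⧸ C') := Submodule.mapQ C C' g hle with hgq
  have hgqs : Function.Surjective gq := by
    intro y
    obtain ⟨q', rfl⟩ := Submodule.Quotient.mk_surjective C' y
    obtain ⟨q, rfl⟩ := hg q'
    exact ⟨Submodule.Quotient.mk q, Submodule.mapQ_apply _ _ _ _⟩
  have hkergq : IsPseudoNull Λ (LinearMap.ker gq) := by
    have hmem : ∀ x : Q, x ∈ LinearMap.ker g →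
        (Submodule.Quotient.mk x : Q ⧸ C) ∈ LinearMap.ker gq := by
      intro x hx
      have : gq (Submodule.Quotient.mk x) = Submodule.Quotient.mk (g x) :=
        Submodule.mapQ_apply _ _ _ _
      rw [LinearMap.mem_ker, this, LinearMap.mem_ker.mp hx]
      simp
    set ψ : LinearMap.ker g →ₗ[Λ] LinearMap.ker gq :=
      LinearMap.codRestrict _ (C.mkQ.comp (LinearMap.ker g).subtype)
        (fun x => hmem _ x.2) with hψ
    have hψs : Function.Surjective ψ := by
      rintro ⟨y, hy⟩
      obtain ⟨x, rfl⟩ := Submodule.Quotient.mk_surjective C y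
      have hgx : g x ∈ C' := by
        have : gq (Submodule.Quotient.mk x) = Submodule.Quotient.mk (g x) :=
          Submodule.mapQ_apply _ _ _ _
        have h0 := LinearMap.mem_ker.mp hy
        rw [this] at h0
        exact (Submodule.Quotient.mk_eq_zero _).mp h0
      obtain ⟨c, hc, hgc⟩ := Submodule.mem_map.mp hgx
      refine ⟨⟨x - c, ?_⟩, ?_⟩
      · rw [LinearMap.mem_ker, map_sub, hgc, sub_self]
      · apply Subtype.ext
        show (Submodule.Quotient.mk (x - c) : Q ⧸ C) = Submodule.Quotient.mk x
        rw [Submodule.Quotient.eq]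
        simpa using C.neg_mem hc
    exact pn_congr (LinearMap.quotKerEquivOfSurjective ψ hψs)
      (hquot _ hker.1 hker.2.1 hker _)
  set f' : N₁ →ₗ[Λ] (Q' ⧸ C') := gq.comp f with hf'
  have hkk : LinearMap.ker f ≤ LinearMap.ker f' := by
    intro x hx
    rw [LinearMap.mem_ker] at hx ⊢
    rw [hf', LinearMap.comp_apply, hx, map_zero]
  refine ⟨N₁, C', f', h1, ?_, ?_, ?_⟩
  · -- C' pseudo-null
    set φ : C →ₗ[Λ] C' := g.restrict (fun x hx => Submodule.mem_map_of_mem hx) with hφ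
    have hφs : Function.Surjective φ := by
      rintro ⟨y, hy⟩
      obtain ⟨c, hc, rfl⟩ := Submodule.mem_map.mp hy
      exact ⟨⟨c, hc⟩, rfl⟩
    exact pn_congr (LinearMap.quotKerEquivOfSurjective φ hφs)
      (hquot _ h2.1 h2.2.1 h2 _)
  · -- kernel of f' pseudo-null
    haveI : Module.Finite Λ N₁ := finite_submodule' N₁
    haveI : Module.Finite Λ (LinearMap.ker f') := finite_submodule' _
    have htN₁ : IsTorsionMod Λ N₁ := isTorsionMod_submodule hNt N₁
    set S : Submodule Λ (LinearMap.ker f') :=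
      (LinearMap.ker f).comap (LinearMap.ker f').subtype with hS
    have hSpn : IsPseudoNull Λ S :=
      pn_congr (Submodule.comapSubtypeEquivOfLe hkk).symm h3
    set θ : LinearMap.ker f' →ₗ[Λ] LinearMap.ker gq :=
      LinearMap.codRestrict _ (f.comp (LinearMap.ker f').subtype)
        (fun x => by
          have hx := LinearMap.mem_ker.mp x.2
          rw [LinearMap.mem_ker]
          exact hx) with hθ
    have hθker : LinearMap.ker θ = S := by
      ext x
      constructor
      · intro hx
        have : f x = 0 := congrArg Subtype.val (LinearMap.mem_ker.mp hx)
        exact this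
      · intro hx
        have : f x = 0 := hx
        exact LinearMap.mem_ker.mpr (Subtype.ext this)
    have hq : IsPseudoNull Λ ((LinearMap.ker f') ⧸ S) := by
      rw [← hθker]
      exact pn_congr θ.quotKerEquivRange.symm
        (hsub _ hkergq.1 hkergq.2.1 hkergq (LinearMap.range θ))
    exact hext _ ‹Module.Finite Λ (LinearMap.ker f')›
      (isTorsionMod_submodule htN₁ _) S hSpn hq
  · -- cokernel of f' pseudo-null
    have hrange : LinearMap.range f ≤ (LinearMap.range f').comap gq := by
      intro x hx
      obtain ⟨n, rfl⟩ := hx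
      exact ⟨n, rfl⟩
    set ρ : ((Q ⧸ C) ⧸ LinearMap.range f) →ₗ[Λ] ((Q' ⧸ C') ⧸ LinearMap.range f') :=
      Submodule.mapQ _ _ gq hrange with hρ
    have hρs : Function.Surjective ρ := by
      intro y
      obtain ⟨z, rfl⟩ := Submodule.Quotient.mk_surjective _ y
      obtain ⟨w, rfl⟩ := hgqs z
      exact ⟨Submodule.Quotient.mk w, Submodule.mapQ_apply _ _ _ _⟩
    exact pn_congr (LinearMap.quotKerEquivOfSurjective ρ hρs)
      (hquot _ h4.1 h4.2.1 h4 _)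

theorem bridge {Λ : Type} [Ring Λ] {M M' : Type} [AddCommGroup M] [Module Λ M]
    [AddCommGroup M'] [Module Λ M'] (π : M →ₗ[Λ] M') {A B : Submodule Λ M}
    {A' B' : Submodule Λ M'}
    (hA : ∀ x ∈ A, π x ∈ A') (hB : ∀ x ∈ B, π x ∈ B')
    (hs : ∀ y ∈ B', ∃ x ∈ B, π x = y) :
    ∃ g : (↥B ⧸ A.comap B.subtype) →ₗ[Λ] (↥B' ⧸ A'.comap B'.subtype),
      Function.Surjective g ∧
      ∀ x : ↥B, g (Submodule.Quotient.mk x) =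
        Submodule.Quotient.mk (⟨π ↑x, hB _ x.2⟩ : ↥B') := by
  set g₀ : ↥B →ₗ[Λ] ↥B' := π.restrict hB with hg₀
  have hcomap : A.comap B.subtype ≤ (A'.comap B'.subtype).comap g₀ := by
    intro x hx
    exact hA _ hx
  refine ⟨Submodule.mapQ _ _ g₀ hcomap, ?_, fun x => Submodule.mapQ_apply _ _ _ _⟩
  intro y
  obtain ⟨b', rfl⟩ := Submodule.Quotient.mk_surjective _ y
  obtain ⟨x, hxB, hx⟩ := hs ↑b' b'.2
  refine ⟨Submodule.Quotient.mk ⟨x, hxB⟩, ?_⟩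
  rw [Submodule.mapQ_apply]
  congr 1
  exact Subtype.ext hx


/-- Let `p` be a prime with `p·1_Λ ≠ 0`, and `M` a finitely generated torsion
`Λ`-module whose `p`-primary submodule `M(p)` is pseudo-null. Then `M` is pseudo-null or
completely faithful iff the `p`-free quotient `M_f = M/M(p)` is pseudo-null or completely
faithful. -/
theorem isPseudoNull_or_completelyFaithful_iff_pFreeQuotient
    (Λ : Type) [Ring Λ] [IsNoetherianRing Λ] [IsNoetherianRing Λᵐᵒᵖ] [NoZeroDivisors Λ]
    -- pseudo-null modules are closed under submodules, quotients and extensions of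
    -- finitely generated torsion `Λ`-modules
    (hsub : ∀ (P : Type) [AddCommGroup P] [Module Λ P], Module.Finite Λ P → IsTorsionMod Λ P →
      IsPseudoNull Λ P → ∀ S : Submodule Λ P, IsPseudoNull Λ S)
    (hquot : ∀ (P : Type) [AddCommGroup P] [Module Λ P], Module.Finite Λ P → IsTorsionMod Λ P →
      IsPseudoNull Λ P → ∀ S : Submodule Λ P, IsPseudoNull Λ (P ⧸ S))
    (hext : ∀ (P : Type) [AddCommGroup P] [Module Λ P], Module.Finite Λ P → IsTorsionMod Λ P →
      ∀ S : Submodule Λ P, IsPseudoNull Λ S → IsPseudoNull Λ (P ⧸ S) → IsPseudoNull Λ P)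
    (p : ℕ) (hp : p.Prime) (hpΛ : (p : Λ) ≠ 0)
    (M : Type) [AddCommGroup M] [Module Λ M] [Module.Finite Λ M]
    (htors : IsTorsionMod Λ M)
    (hppn : IsPseudoNull Λ (pPrimarySub Λ p M)) :
    ((IsPseudoNull Λ M ∨ CompletelyFaithful Λ M) ↔
      (IsPseudoNull Λ (M ⧸ pPrimarySub Λ p M) ∨
        CompletelyFaithful Λ (M ⧸ pPrimarySub Λ p M))) := by
  classical
  set K : Submodule Λ M := pPrimarySub Λ p M with hK
  haveI hKfin : Module.Finite Λ K := finite_submodule' K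
  have hKt : IsTorsionMod Λ K := isTorsionMod_submodule htors K
  haveI hMqfin : Module.Finite Λ (M ⧸ K) :=
    Module.Finite.of_surjective K.mkQ (Submodule.mkQ_surjective K)
  have hMqt : IsTorsionMod Λ (M ⧸ K) :=
    isTorsionMod_of_surjective K.mkQ (Submodule.mkQ_surjective K) htors
  have hzero : ∀ (P : Type) [AddCommGroup P] [Module Λ P], Subsingleton P →
      IsPseudoNull Λ P := by
    intro P _ _ hP
    haveI := hP
    have hbot : IsPseudoNull Λ (⊥ : Submodule Λ K) := hsub K hKfin hKt hppn ⊥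
    haveI : Subsingleton (⊥ : Submodule Λ ↥K) := by
      constructor
      intro a b
      apply Subtype.ext
      have ha := (Submodule.mem_bot Λ).mp a.2
      have hb := (Submodule.mem_bot Λ).mp b.2
      rw [ha, hb]
    exact pn_congr (LinearEquiv.ofSubsingleton _ _) hbot
  have key : ∀ (N : Type) [AddCommGroup N] [Module Λ N], Module.Finite Λ N →
      IsTorsionMod Λ N → (PseudoRelated Λ N M ↔ PseudoRelated Λ N (M ⧸ K)) := by
    intro N _ _ hNf hNt
    haveI := hNf
    constructor
    · intro hrel
      unfold PseudoRelated at hrel ⊢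
      obtain ⟨A, B, hAB, hinner⟩ := hrel
      obtain ⟨g, hgs, hgfor⟩ := bridge K.mkQ (A := A) (B := B)
        (A' := A.map K.mkQ) (B' := B.map K.mkQ)
        (fun x hx => Submodule.mem_map_of_mem hx)
        (fun x hx => Submodule.mem_map_of_mem hx)
        (fun y hy => by
          obtain ⟨x, hx, rfl⟩ := Submodule.mem_map.mp hy
          exact ⟨x, hx, rfl⟩)
      have hT : IsPseudoNull Λ (K.comap B.subtype) := by
        refine pn_congr ?_ (hsub K hKfin hKt hppn (B.comap K.subtype))
        exact
          { toFun := fun x => ⟨⟨x.1.1, x.2⟩, x.1.2⟩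
            invFun := fun x => ⟨⟨x.1.1, x.2⟩, x.1.2⟩
            map_add' := fun _ _ => rfl
            map_smul' := fun _ _ => rfl
            left_inv := fun _ => rfl
            right_inv := fun _ => rfl }
      have hmemker : ∀ t : ↥(K.comap B.subtype),
          (Submodule.Quotient.mk (↑t : ↥B) :
            (↥B ⧸ A.comap B.subtype)) ∈ LinearMap.ker g := by
        intro t
        rw [LinearMap.mem_ker, hgfor, Submodule.Quotient.mk_eq_zero]
        show K.mkQ ↑↑t ∈ A.map K.mkQ
        have h0 : K.mkQ ↑↑t = 0 := by
          rw [Submodule.mkQ_apply, Submodule.Quotient.mk_eq_zero]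
          exact t.2
        rw [h0]
        exact Submodule.zero_mem _
      set ψ : ↥(K.comap B.subtype) →ₗ[Λ] LinearMap.ker g :=
        LinearMap.codRestrict _
          ((A.comap B.subtype).mkQ.comp (K.comap B.subtype).subtype)
          (fun t => hmemker t) with hψ
      have hψs : Function.Surjective ψ := by
        rintro ⟨y, hy⟩
        obtain ⟨x, rfl⟩ := Submodule.Quotient.mk_surjective _ y
        have hx0 : K.mkQ ↑x ∈ A.map K.mkQ := by
          have := LinearMap.mem_ker.mp hy
          rw [hgfor, Submodule.Quotient.mk_eq_zero] at this
          exact this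
        obtain ⟨a, ha, hax⟩ := Submodule.mem_map.mp hx0
        have hxa : (↑x - a) ∈ K := by
          have h0 : K.mkQ (↑x - a) = 0 := by rw [map_sub, hax, sub_self]
          rw [Submodule.mkQ_apply, Submodule.Quotient.mk_eq_zero] at h0
          exact h0
        have hmem2 : (⟨↑x - a, B.sub_mem x.2 (hAB ha)⟩ : ↥B) ∈ K.comap B.subtype := hxa
        refine ⟨⟨⟨↑x - a, B.sub_mem x.2 (hAB ha)⟩, hmem2⟩, ?_⟩
        apply Subtype.ext
        show (Submodule.Quotient.mk (⟨↑x - a, _⟩ : ↥B) :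
          (↥B ⧸ A.comap B.subtype)) = Submodule.Quotient.mk x
        rw [Submodule.Quotient.eq]
        refine Submodule.mem_comap.mpr ?_
        have hv : (B.subtype) ((⟨↑x - a, B.sub_mem x.2 (hAB ha)⟩ : ↥B) - x) = -a := by
          simp
        rw [hv]
        exact A.neg_mem ha
      have hkerg : IsPseudoNull Λ (LinearMap.ker g) :=
        pn_congr (LinearMap.quotKerEquivOfSurjective ψ hψs)
          (hquot _ hT.1 hT.2.1 hT _)
      refine ⟨A.map K.mkQ, B.map K.mkQ, Submodule.map_mono hAB, ?_⟩
      exact rel_surj hsub hquot hext hNt g hgs hkerg hinner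
    · intro hrel
      unfold PseudoRelated at hrel ⊢
      obtain ⟨A', B', hA'B', hinner⟩ := hrel
      set A : Submodule Λ M := A'.comap K.mkQ with hA
      set B : Submodule Λ M := B'.comap K.mkQ with hB
      obtain ⟨g, hgs, hgfor⟩ := bridge K.mkQ (A := A) (B := B) (A' := A') (B' := B')
        (fun x hx => hx) (fun x hx => hx)
        (fun y hy => by
          obtain ⟨x, rfl⟩ := Submodule.mkQ_surjective K y
          exact ⟨x, hy, rfl⟩)
      have hginj : Function.Injective g := by
        rw [← LinearMap.ker_eq_bot, eq_bot_iff]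
        intro y hy
        obtain ⟨x, rfl⟩ := Submodule.Quotient.mk_surjective _ y
        have h0 := LinearMap.mem_ker.mp hy
        rw [hgfor, Submodule.Quotient.mk_eq_zero] at h0
        rw [Submodule.mem_bot, Submodule.Quotient.mk_eq_zero]
        exact h0
      set e := LinearEquiv.ofBijective g ⟨hginj, hgs⟩ with he
      haveI : Subsingleton (LinearMap.ker e.symm.toLinearMap) := by
        constructor
        rintro ⟨a, ha⟩ ⟨b, hb⟩
        apply Subtype.ext
        rw [LinearMap.mem_ker] at ha hb
        exact e.symm.injective (by rw [show e.symm a = 0 from ha, show e.symm b = 0 from hb])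
      have hkers : IsPseudoNull Λ (LinearMap.ker e.symm.toLinearMap) := hzero _ this
      refine ⟨A, B, fun x hx => hA'B' hx, ?_⟩
      exact rel_surj hsub hquot hext hNt e.symm.toLinearMap e.symm.surjective hkers hinner
  constructor
  · rintro (hPN | hCF)
    · exact Or.inl (hquot M ‹Module.Finite Λ M› htors hPN K)
    · refine Or.inr ?_
      intro N _ _ hNf hNt hNpn hNrel l hl
      exact hCF N hNf hNt hNpn ((key N hNf hNt).mpr hNrel) l hl
  · rintro (hPN | hCF)
    · exact Or.inl (hext M ‹Module.Finite Λ M› htors K hppn hPN)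
    · refine Or.inr ?_
      intro N _ _ hNf hNt hNpn hNrel l hl
      exact hCF N hNf hNt hNpn ((key N hNf hNt).mp hNrel) l hl
end
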